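/- arXiv:1805.10559 — 5 statements merged into one kernel-verified Lean document; each statement's English description precedes it below -/
import Mathlib

section
/- Let T ∼ Bin(N,p) with p ∈ (0,1), let i be an integer with 0 ≤ i ≤ N, and let t ∈ ℤ be such that 0 ≤ i − t ≤ N. Then Pr(T = i − t) ≤ Pr(T = i) · ((i+1)(1−p) / ((N − i + 1)p))^t, i.e., Pr(T = i − t)/Pr(T = i) ≤ exp(t · log((i+1)(1−p)/((N−i+1)p))). -/
/-- The probability mass function of the binomial distribution `Bin(N, p)` at `j`. -/
noncomputable def binomPMF (N : ℕ) (p : ℝ) (j : ℕ) : ℝ :=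
  (N.choose j : ℝ) * p ^ j * (1 - p) ^ (N - j)

lemma binomPMF_nonneg (N : ℕ) (p : ℝ) (hp : 0 ≤ p) (hp1 : p ≤ 1) (j : ℕ) :
    0 ≤ binomPMF N p j := by
  unfold binomPMF
  have h1 : (0:ℝ) ≤ 1 - p := by linarith
  positivity

lemma binom_step (N : ℕ) (p : ℝ) (k : ℕ) (hk : k < N) :
    binomPMF N p k * (((N:ℝ) - k) * p) = binomPMF N p (k+1) * (((k:ℝ)+1) * (1 - p)) := by
  unfold binomPMF
  have h2 : (N.choose (k+1) : ℝ) * ((k:ℝ)+1) = (N.choose k : ℝ) * ((N:ℝ) - k) := by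
    have := Nat.choose_succ_right_eq N k
    have h := congrArg (Nat.cast : ℕ → ℝ) this
    push_cast [Nat.cast_sub hk.le] at h
    linarith [h]
  have h1 : N - k = (N - (k+1)) + 1 := by omega
  rw [h1, pow_succ, pow_succ]
  linear_combination (-(p ^ k * p * (1 - p) ^ (N - (k+1)) * (1 - p))) * h2

/-- For `T ~ Bin(N, p)`, `0 ≤ i ≤ N` and `t ∈ ℤ` with `0 ≤ i - t ≤ N`,
`Pr(T = i - t) ≤ Pr(T = i) · ((i+1)(1-p)/((N-i+1)p))^t`. -/
theorem binomial_prob_ratio_bound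
    (N : ℕ) (p : ℝ) (hp : 0 < p) (hp1 : p < 1)
    (i : ℕ) (hi : i ≤ N) (t : ℤ)
    (ht0 : 0 ≤ (i : ℤ) - t) (htN : (i : ℤ) - t ≤ (N : ℤ)) :
    binomPMF N p ((i : ℤ) - t).toNat
      ≤ binomPMF N p i * ((((i : ℝ) + 1) * (1 - p) / (((N : ℝ) - i + 1) * p)) ^ t) := by
  have hq : (0:ℝ) < 1 - p := by linarith
  have hNi : (0:ℝ) < (N:ℝ) - i + 1 := by
    have : (i:ℝ) ≤ N := by exact_mod_cast hi
    linarith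
  set A : ℝ := ((i:ℝ) + 1) * (1 - p) with hA
  set B : ℝ := ((N:ℝ) - i + 1) * p with hB
  have hApos : 0 < A := by positivity
  have hBpos : 0 < B := by positivity
  have hr : (0:ℝ) < A / B := div_pos hApos hBpos
  -- step inequalities
  have hdown : ∀ k : ℕ, k < i → binomPMF N p k ≤ binomPMF N p (k+1) * (A / B) := by
    intro k hki
    have hkN : k < N := lt_of_lt_of_le hki hi
    have E := binom_step N p k hkN
    have h0 := binomPMF_nonneg N p hp.le hp1.le k
    have h1 := binomPMF_nonneg N p hp.le hp1.le (k+1)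
    rw [← mul_div_assoc, le_div_iff₀ hBpos]
    have hkr : (k:ℝ) + 1 ≤ i := by exact_mod_cast hki
    have hNir : (i:ℝ) ≤ N := by exact_mod_cast hi
    have c1 : binomPMF N p k * B ≤ binomPMF N p k * (((N:ℝ) - k) * p) := by
      apply mul_le_mul_of_nonneg_left _ h0
      rw [hB]
      nlinarith
    have c2 : binomPMF N p (k+1) * (((k:ℝ)+1) * (1 - p)) ≤ binomPMF N p (k+1) * A := by
      apply mul_le_mul_of_nonneg_left _ h1
      rw [hA]
      nlinarith
    calc binomPMF N p k * B ≤ binomPMF N p k * (((N:ℝ) - k) * p) := c1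
      _ = binomPMF N p (k+1) * (((k:ℝ)+1) * (1 - p)) := E
      _ ≤ binomPMF N p (k+1) * A := c2
  have hup : ∀ k : ℕ, i ≤ k → k < N → binomPMF N p (k+1) * (A / B) ≤ binomPMF N p k := by
    intro k hik hkN
    have E := binom_step N p k hkN
    have h0 := binomPMF_nonneg N p hp.le hp1.le k
    have h1 := binomPMF_nonneg N p hp.le hp1.le (k+1)
    rw [← mul_div_assoc, div_le_iff₀ hBpos]
    have hkr : (i:ℝ) ≤ k := by exact_mod_cast hik
    have hkNr : (k:ℝ) < N := by exact_mod_cast hkN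
    have c2 : binomPMF N p (k+1) * A ≤ binomPMF N p (k+1) * (((k:ℝ)+1) * (1 - p)) := by
      apply mul_le_mul_of_nonneg_left _ h1
      rw [hA]; nlinarith
    have c1 : binomPMF N p k * (((N:ℝ) - k) * p) ≤ binomPMF N p k * B := by
      apply mul_le_mul_of_nonneg_left _ h0
      rw [hB]; nlinarith
    calc binomPMF N p (k+1) * A ≤ binomPMF N p (k+1) * (((k:ℝ)+1) * (1 - p)) := c2
      _ = binomPMF N p k * (((N:ℝ) - k) * p) := E.symm
      _ ≤ binomPMF N p k * B := c1
  -- down iteration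
  have hdownIter : ∀ d : ℕ, d ≤ i →
      binomPMF N p (i - d) ≤ binomPMF N p i * (A / B) ^ d := by
    intro d
    induction d with
    | zero => intro _; simp
    | succ d ih =>
      intro hd
      have hd' : d ≤ i := by omega
      have ihd := ih hd'
      have hk : i - (d+1) < i := by omega
      have hkk : i - (d+1) + 1 = i - d := by omega
      have := hdown (i - (d+1)) hk
      rw [hkk] at this
      calc binomPMF N p (i - (d+1)) ≤ binomPMF N p (i - d) * (A / B) := this
        _ ≤ (binomPMF N p i * (A / B) ^ d) * (A / B) :=
            mul_le_mul_of_nonneg_right ihd hr.le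
        _ = binomPMF N p i * (A / B) ^ (d+1) := by ring
  -- up iteration
  have hupIter : ∀ d : ℕ, i + d ≤ N →
      binomPMF N p (i + d) * (A / B) ^ d ≤ binomPMF N p i := by
    intro d
    induction d with
    | zero => intro _; simp
    | succ d ih =>
      intro hd
      have hd' : i + d ≤ N := by omega
      have ihd := ih hd'
      have hkN : i + d < N := by omega
      have := hup (i + d) (Nat.le_add_right i d) hkN
      show binomPMF N p (i + d + 1) * (A / B) ^ (d+1) ≤ binomPMF N p i
      calc binomPMF N p (i + d + 1) * (A / B) ^ (d+1)
          = (binomPMF N p (i + d + 1) * (A / B)) * (A / B) ^ d := by ring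
        _ ≤ binomPMF N p (i + d) * (A / B) ^ d :=
            mul_le_mul_of_nonneg_right this (pow_nonneg hr.le d)
        _ ≤ binomPMF N p i := ihd
  rcases le_or_gt 0 t with ht | ht
  · obtain ⟨d, rfl⟩ : ∃ d : ℕ, t = (d:ℤ) := ⟨t.toNat, (Int.toNat_of_nonneg ht).symm⟩
    have hdi : d ≤ i := by omega
    have htoNat : ((i:ℤ) - d).toNat = i - d := by omega
    rw [htoNat, zpow_natCast]
    exact hdownIter d hdi
  · obtain ⟨d, rfl⟩ : ∃ d : ℕ, t = -(d:ℤ) := ⟨(-t).toNat, by omega⟩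
    have hdN : i + d ≤ N := by omega
    have htoNat : ((i:ℤ) - (-(d:ℤ))).toNat = i + d := by omega
    rw [htoNat, zpow_neg, zpow_natCast, ← div_eq_mul_inv, le_div_iff₀ (pow_pos hr d)]
    exact hupIter d hdN
end

section
/- Fix k ≥ 2, X^max > 0, δ ∈ (0,1), and let X, X' ∈ [−X^max, X^max]^d. Let w = 2X^max/(k−1) be the bin width, and for each coordinate j define the stochastic quantization to integer bin indices: U(X)(j) = r_j + 1 with probability (X(j) − B(r_j))/w and U(X)(j) = r_j otherwise, independently across j, where B(r) = −X^max + rw and B(r_j) ≤ X(j) ≤ B(r_j + 1); define U(X') analogously. Set L̃ = ‖X − X'‖₁/w. Then there exist coupled random vectors Y, Y' ∈ ℤ^d whose marginal laws equal those of U(X) and U(X') respectively, such that almost surely ‖Y − Y'‖_∞ ≤ ‖X − X'‖_∞/w + 2, and with probability at least 1 − δ both of the following hold: ‖Y − Y'‖₁ ≤ L̃ + √(2 L̃ log(2/δ)) + (4/3) log(2/δ), and ‖Y − Y'‖₂ ≤ ‖X − X'‖₂/w + √( L̃ + √(8 L̃ log(2/δ)) + (4/3) log(2/δ) ). -/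
/-!
Couple the two quantizations through one uniform variable `u j ∈ [0, 1]` per coordinate:
`Y j = r j + 𝟙[u j < p j]` with `p j = (X j - B (r j)) / w`, and `Y' j = r' j + 𝟙[u j < q j]`
likewise. The differences `V j = Y j - Y' j` are independent, have mean `(X j - X' j) / w`,
and each lies in an interval `[n, n + 1]` with `n ∈ ℤ`. Such a variable has constant sign, so `𝔼 |V j| = |𝔼 V j|`, and by the
Bhatia–Davis inequality its variance is at most `|𝔼 V j|`. A Bernstein-type Chernoff bound for
sums of independent `[0, 1]`-valued variables, applied to the `|V j|` shifted into `[0, 1]` and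
to the `(V j - 𝔼 V j) ^ 2`, gives the `ℓ₁` bound and, through Minkowski's inequality, the `ℓ₂`
bound, each failing with probability at most `exp (-log (2 / δ)) = δ / 2`.
-/

open MeasureTheory ProbabilityTheory Real Set
open scoped unitInterval

lemma sqrt_sum_add_sq_le {ι : Type*} [Fintype ι] (f g : ι → ℝ) :
    √(∑ i, (f i + g i) ^ 2) ≤ √(∑ i, f i ^ 2) + √(∑ i, g i ^ 2) := by
  simpa [EuclideanSpace.norm_eq] using norm_add_le (WithLp.toLp 2 f) (WithLp.toLp 2 g)

lemma sqrt_sum_div_sq {ι : Type*} [Fintype ι] (f : ι → ℝ) {w : ℝ} (hw : 0 < w) :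
    √(∑ i, (f i / w) ^ 2) = √(∑ i, f i ^ 2) / w := by
  simp_rw [div_pow, ← Finset.sum_div, sqrt_div' _ (sq_nonneg w), sqrt_sq hw.le]

lemma sub_div_mem_unitInterval {x b w : ℝ} (hw : 0 < w) (hb : b ≤ x) (hx : x ≤ b + w) :
    (x - b) / w ∈ I :=
  ⟨div_nonneg (by linarith) hw.le, (div_le_one hw).2 (by linarith)⟩

lemma exp_mul_le_one_add_mul_exp_sub_one {x : ℝ} (hx : x ∈ Icc (0 : ℝ) 1) (t : ℝ) :
    exp (t * x) ≤ 1 + x * (exp t - 1) := by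
  have h := convexOn_exp.2 (mem_univ 0) (mem_univ t) (sub_nonneg.2 hx.2) hx.1 (by ring)
  simp only [smul_eq_mul, mul_zero, exp_zero, mul_one, zero_add] at h
  rw [mul_comm]
  linarith

lemma exists_chernoff_exponent {M L c : ℝ} (hM : 0 ≤ M) (hML : M ≤ L) (hc : 0 < c) :
    ∃ t : ℝ, 0 ≤ t ∧ M * (exp t - 1) - t * (M + √(2 * L * c) + 4 / 3 * c) ≤ -c := by
  have hsqrt : √(2 * M * c) ≤ √(2 * L * c) := by gcongr
  rcases le_or_gt (2 * c) M with h2c | h2c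
  · -- `t = √(2c/M)` balances the quadratic term `M t² / 2 = c` against `t √(2Mc) = 2c`
    have hMpos : 0 < M := by linarith
    set t := √(2 * c / M)
    have ht0 : 0 < t := sqrt_pos.2 (by positivity)
    have ht1 : t ≤ 1 := sqrt_le_one.2 ((div_le_one hMpos).2 h2c)
    have hMt2 : M * t ^ 2 = 2 * c := by rw [sq_sqrt (by positivity)]; field_simp
    have hMt : M * t = √(2 * M * c) := by
      rw [show 2 * M * c = (M * t) ^ 2 by linear_combination -M * hMt2, sqrt_sq (by positivity)]
    have hexp : exp t ≤ 1 + t + t ^ 2 / 2 + t ^ 3 * (2 / 9) := by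
      have h := exp_bound' ht0.le ht1 (n := 3) (by norm_num)
      norm_num [Finset.sum_range_succ, Nat.factorial] at h
      linarith
    refine ⟨t, ht0.le, ?_⟩
    nlinarith [mul_le_mul_of_nonneg_left hexp hM, mul_le_mul_of_nonneg_left
      (hMt ▸ hsqrt : M * t ≤ √(2 * L * c)) ht0.le]
  · refine ⟨1, zero_le_one, ?_⟩
    have hexp : exp 1 ≤ 2.75 := by linarith [exp_one_lt_d9]
    have hMsqrt : M ≤ √(2 * M * c) := le_sqrt_of_sq_le (by nlinarith)
    nlinarith [mul_le_mul_of_nonneg_left hexp hM]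

section Bernstein

variable {Ω : Type*} [MeasurableSpace Ω] {μ : Measure Ω} [IsProbabilityMeasure μ]

lemma mgf_le_exp_integral_mul_of_mem_Icc {W : Ω → ℝ} (hmeas : Measurable W)
    (hW : ∀ ω, W ω ∈ Icc (0 : ℝ) 1) (t : ℝ) :
    mgf W μ t ≤ exp (μ[W] * (exp t - 1)) := by
  have hint : Integrable W μ := .of_mem_Icc 0 1 hmeas.aemeasurable (ae_of_all _ hW)
  calc mgf W μ t ≤ ∫ ω, (1 + W ω * (exp t - 1)) ∂μ :=
        integral_mono (.of_mem_Icc 0 (exp |t|) (by fun_prop) (ae_of_all _ fun ω =>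
            ⟨(exp_pos _).le, exp_le_exp.2 <| by
              nlinarith [le_abs_self t, abs_nonneg t, (hW ω).1, (hW ω).2]⟩))
          ((integrable_const 1).add (hint.mul_const _))
          fun ω => exp_mul_le_one_add_mul_exp_sub_one (hW ω) t
    _ = 1 + μ[W] * (exp t - 1) := by
        rw [integral_add (integrable_const _) (hint.mul_const _), integral_mul_const]; simp
    _ ≤ exp (μ[W] * (exp t - 1)) := by linarith [add_one_le_exp (μ[W] * (exp t - 1))]

theorem measureReal_sum_ge_le_exp_neg {ι : Type*} [Fintype ι] {W : ι → Ω → ℝ}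
    (hind : iIndepFun W μ) (hmeas : ∀ i, Measurable (W i)) (hW : ∀ i ω, W i ω ∈ Icc (0 : ℝ) 1)
    {M L c : ℝ} (hM : ∑ i, μ[W i] ≤ M) (hML : M ≤ L) (hc : 0 < c) :
    μ.real {ω | M + √(2 * L * c) + 4 / 3 * c ≤ ∑ i, W i ω} ≤ exp (-c) := by
  have hM0 : 0 ≤ M :=
    (Finset.sum_nonneg fun i _ => integral_nonneg fun ω => (hW i ω).1).trans hM
  obtain ⟨t, ht, hrate⟩ := exists_chernoff_exponent hM0 hML hc
  have hexp_int : ∀ i, Integrable (fun ω => exp (t * W i ω)) μ := fun i =>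
    .of_mem_Icc 0 (exp t) (by fun_prop) (ae_of_all _ fun ω =>
      ⟨(exp_pos _).le, exp_le_exp.2 (by nlinarith [(hW i ω).1, (hW i ω).2])⟩)
  have hmgf : mgf (∑ i, W i) μ t ≤ exp (M * (exp t - 1)) :=
    calc mgf (∑ i, W i) μ t = ∏ i, mgf (W i) μ t := hind.mgf_sum hmeas _
      _ ≤ ∏ i, exp (μ[W i] * (exp t - 1)) := Finset.prod_le_prod (fun i _ => mgf_nonneg)
          fun i _ => mgf_le_exp_integral_mul_of_mem_Icc (hmeas i) (hW i) t
      _ = exp ((∑ i, μ[W i]) * (exp t - 1)) := by rw [← exp_sum, Finset.sum_mul]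
      _ ≤ exp (M * (exp t - 1)) := by
          gcongr; linarith [add_one_le_exp t]
  calc μ.real {ω | M + √(2 * L * c) + 4 / 3 * c ≤ ∑ i, W i ω}
      = μ.real {ω | M + √(2 * L * c) + 4 / 3 * c ≤ (∑ i, W i) ω} := by simp [Finset.sum_apply]
    _ ≤ exp (-t * (M + √(2 * L * c) + 4 / 3 * c)) * mgf (∑ i, W i) μ t :=
        measure_ge_le_exp_mul_mgf _ ht (hind.integrable_exp_mul_sum hmeas fun i _ => hexp_int i)
    _ ≤ exp (-t * (M + √(2 * L * c) + 4 / 3 * c)) * exp (M * (exp t - 1)) := by gcongr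
    _ ≤ exp (-c) := by rw [← exp_add]; gcongr; linarith

end Bernstein

section IntervalValued

variable {Ω : Type*} {V : Ω → ℝ} {n : ℤ}

lemma forall_nonneg_or_forall_nonpos_of_mem_Icc (hV : ∀ ω, V ω ∈ Icc (n : ℝ) (n + 1)) :
    (∀ ω, 0 ≤ V ω) ∨ (∀ ω, V ω ≤ 0) := by
  rcases le_or_gt 0 n with hn | hn
  · have hn : (0 : ℝ) ≤ n := by exact_mod_cast hn
    exact .inl fun ω => hn.trans (hV ω).1
  · have hn : (n : ℝ) + 1 ≤ 0 := by exact_mod_cast hn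
    exact .inr fun ω => (hV ω).2.trans hn

lemma exists_abs_mem_Icc (hV : ∀ ω, V ω ∈ Icc (n : ℝ) (n + 1)) :
    ∃ m : ℕ, ∀ ω, |V ω| ∈ Icc (m : ℝ) (m + 1) := by
  rcases le_or_gt 0 n with hn | hn
  · obtain ⟨m, rfl⟩ := Int.eq_ofNat_of_zero_le hn
    refine ⟨m, fun ω => ?_⟩
    rw [abs_of_nonneg (le_trans (by positivity) (hV ω).1)]
    exact_mod_cast hV ω
  · obtain ⟨m, hm⟩ := Int.eq_ofNat_of_zero_le (show 0 ≤ -n - 1 by omega)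
    have hm : (m : ℝ) = -n - 1 := by exact_mod_cast hm.symm
    have hn : (n : ℝ) + 1 ≤ 0 := by exact_mod_cast hn
    refine ⟨m, fun ω => ?_⟩
    rw [abs_of_nonpos ((hV ω).2.trans hn), hm]
    constructor <;> linarith [(hV ω).1, (hV ω).2]

variable [MeasurableSpace Ω] {μ : Measure Ω}

lemma integral_abs_eq_abs_integral (hV : ∀ ω, V ω ∈ Icc (n : ℝ) (n + 1)) :
    ∫ ω, |V ω| ∂μ = |μ[V]| := by
  rcases forall_nonneg_or_forall_nonpos_of_mem_Icc hV with hpos | hneg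
  · rw [abs_of_nonneg (integral_nonneg hpos)]
    exact integral_congr_ae (ae_of_all _ fun ω => abs_of_nonneg (hpos ω))
  · rw [abs_of_nonpos (integral_nonpos hneg), ← integral_neg]
    exact integral_congr_ae (ae_of_all _ fun ω => abs_of_nonpos (hneg ω))

variable [IsProbabilityMeasure μ]

lemma integral_mem_Icc_of_forall_mem_Icc {a b : ℝ} (hmeas : Measurable V)
    (hV : ∀ ω, V ω ∈ Icc a b) : μ[V] ∈ Icc a b := by
  have hint : Integrable V μ := .of_mem_Icc a b hmeas.aemeasurable (ae_of_all _ hV)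
  constructor
  · simpa using integral_mono (integrable_const a) hint fun ω => (hV ω).1
  · simpa using integral_mono hint (integrable_const b) fun ω => (hV ω).2

lemma abs_sub_integral_le_one (hmeas : Measurable V) (hV : ∀ ω, V ω ∈ Icc (n : ℝ) (n + 1))
    (ω : Ω) : |V ω - μ[V]| ≤ 1 := by
  have hD := integral_mem_Icc_of_forall_mem_Icc (μ := μ) hmeas hV
  rw [abs_le]
  constructor <;> linarith [(hV ω).1, (hV ω).2, hD.1, hD.2]

lemma variance_le_abs_integral (hmeas : Measurable V) (hV : ∀ ω, V ω ∈ Icc (n : ℝ) (n + 1)) :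
    Var[V; μ] ≤ |μ[V]| := by
  have hD := integral_mem_Icc_of_forall_mem_Icc (μ := μ) hmeas hV
  refine (variance_le_sub_mul_sub (ae_of_all _ hV) hmeas.aemeasurable).trans ?_
  rcases le_or_gt 0 n with hn | hn
  · have hn : (0 : ℝ) ≤ n := by exact_mod_cast hn
    rw [abs_of_nonneg (by linarith [hD.1])]
    nlinarith [hD.1, hD.2]
  · have hn : (n : ℝ) + 1 ≤ 0 := by exact_mod_cast hn
    rw [abs_of_nonpos (by linarith [hD.2])]
    nlinarith [hD.1, hD.2]

end IntervalValued

section Concentration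

variable {Ω ι : Type*} [MeasurableSpace Ω] {μ : Measure Ω} [IsProbabilityMeasure μ] [Fintype ι]
  {V : ι → Ω → ℝ} {n : ι → ℤ} {L c : ℝ}

lemma measureReal_sum_abs_gt_le_exp_neg (hind : iIndepFun V μ) (hmeas : ∀ i, Measurable (V i))
    (hV : ∀ i ω, V i ω ∈ Icc (n i : ℝ) (n i + 1)) (hL : ∑ i, |μ[V i]| ≤ L) (hc : 0 < c) :
    μ.real {ω | L + √(2 * L * c) + 4 / 3 * c < ∑ i, |V i ω|} ≤ exp (-c) := by
  choose m hm using fun i => exists_abs_mem_Icc (hV i)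
  have hW : ∀ i ω, |V i ω| - m i ∈ Icc (0 : ℝ) 1 := fun i ω =>
    ⟨by linarith [(hm i ω).1], by linarith [(hm i ω).2]⟩
  have hmean : ∑ i, μ[fun ω => |V i ω| - m i] ≤ L - ∑ i, (m i : ℝ) := by
    have hint : ∀ i, Integrable (fun ω => |V i ω|) μ := fun i =>
      .of_mem_Icc _ _ (by fun_prop) (ae_of_all _ (hm i))
    simp_rw [integral_sub (hint _) (integrable_const _), integral_abs_eq_abs_integral (hV _),
      integral_const, Finset.sum_sub_distrib]
    simpa using hL
  have hindW : iIndepFun (fun i ω => |V i ω| - m i) μ :=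
    hind.comp (fun i x => |x| - m i) fun i => by fun_prop
  refine (measureReal_mono fun ω hω => ?_).trans <| measureReal_sum_ge_le_exp_neg hindW
    (fun i => by fun_prop) hW hmean (sub_le_self L (by positivity)) hc
  simp only [mem_ofPred_eq, Finset.sum_sub_distrib] at hω ⊢
  linarith

lemma measureReal_sum_sq_sub_gt_le_exp_neg (hind : iIndepFun V μ)
    (hmeas : ∀ i, Measurable (V i)) (hV : ∀ i ω, V i ω ∈ Icc (n i : ℝ) (n i + 1))
    (hL : ∑ i, |μ[V i]| ≤ L) (hc : 0 < c) :
    μ.real {ω | L + √(2 * L * c) + 4 / 3 * c < ∑ i, (V i ω - μ[V i]) ^ 2} ≤ exp (-c) := by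
  have hW : ∀ i ω, (V i ω - μ[V i]) ^ 2 ∈ Icc (0 : ℝ) 1 := fun i ω =>
    ⟨sq_nonneg _, sq_le_one_iff_abs_le_one _ |>.2 (abs_sub_integral_le_one (hmeas i) (hV i) ω)⟩
  have hmean : ∑ i, μ[fun ω => (V i ω - μ[V i]) ^ 2] ≤ L := by
    refine le_trans (Finset.sum_le_sum fun i _ => ?_) hL
    rw [← variance_eq_integral (hmeas i).aemeasurable]
    exact variance_le_abs_integral (hmeas i) (hV i)
  have hindW : iIndepFun (fun i ω => (V i ω - μ[V i]) ^ 2) μ :=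
    hind.comp (fun i (x : ℝ) => (x - ∫ ω, V i ω ∂μ) ^ 2) fun i => by fun_prop
  refine (measureReal_mono fun ω hω => ?_).trans <| measureReal_sum_ge_le_exp_neg hindW
    (fun i => by fun_prop) hW hmean le_rfl hc
  exact le_of_lt (α := ℝ) hω

theorem le_measureReal_sum_abs_le_and_sqrt_sum_sq_le (hind : iIndepFun V μ)
    (hmeas : ∀ i, Measurable (V i)) (hV : ∀ i ω, V i ω ∈ Icc (n i : ℝ) (n i + 1))
    (hL : ∑ i, |μ[V i]| ≤ L) (hc : 0 < c) :
    1 - 2 * exp (-c) ≤ μ.real {ω | ∑ i, |V i ω| ≤ L + √(2 * L * c) + 4 / 3 * c ∧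
      √(∑ i, V i ω ^ 2) ≤ √(∑ i, μ[V i] ^ 2) + √(L + √(2 * L * c) + 4 / 3 * c)} := by
  set good := {ω | ∑ i, |V i ω| ≤ L + √(2 * L * c) + 4 / 3 * c ∧
      √(∑ i, V i ω ^ 2) ≤ √(∑ i, μ[V i] ^ 2) + √(L + √(2 * L * c) + 4 / 3 * c)}
  have hcover : univ ⊆ good ∪ {ω | L + √(2 * L * c) + 4 / 3 * c < ∑ i, |V i ω|}
      ∪ {ω | L + √(2 * L * c) + 4 / 3 * c < ∑ i, (V i ω - μ[V i]) ^ 2} := by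
    intro ω _
    by_contra! h
    simp only [mem_union, mem_ofPred_eq, not_or, not_lt] at h
    obtain ⟨⟨hgood, hl1⟩, hl2⟩ := h
    refine hgood ⟨hl1, ?_⟩
    calc √(∑ i, V i ω ^ 2) = √(∑ i, (μ[V i] + (V i ω - μ[V i])) ^ 2) := by simp
      _ ≤ _ := sqrt_sum_add_sq_le _ _
      _ ≤ _ := by gcongr
  have hunion := (measureReal_mono (μ := μ) hcover).trans
    ((measureReal_union_le _ _).trans (add_le_add_left (measureReal_union_le _ _) _))
  rw [probReal_univ] at hunion
  linarith [measureReal_sum_abs_gt_le_exp_neg hind hmeas hV hL hc,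
    measureReal_sum_sq_sub_gt_le_exp_neg hind hmeas hV hL hc]

end Concentration

noncomputable def stochasticRound (r : ℕ) (p u : I) : ℕ := if u < p then r + 1 else r

section StochasticRound

variable (r : ℕ) (p : I)

@[fun_prop]
lemma measurable_stochasticRound : Measurable (stochasticRound r p) :=
  Measurable.ite measurableSet_Iio measurable_const measurable_const

lemma stochasticRound_eq_or_eq_succ (u : I) :
    stochasticRound r p u = r ∨ stochasticRound r p u = r + 1 := by
  unfold stochasticRound
  split_ifs <;> simp

lemma cast_stochasticRound (u : I) :
    (stochasticRound r p u : ℝ) = r + (Iio p).indicator 1 u := by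
  unfold stochasticRound
  split_ifs with h <;> simp [h]

lemma integrable_stochasticRound : Integrable (fun u => (stochasticRound r p u : ℝ)) := by
  simp_rw [cast_stochasticRound]
  exact (integrable_const _).add ((integrable_const 1).indicator measurableSet_Iio)

lemma volume_stochasticRound_eq_succ :
    volume {u | stochasticRound r p u = r + 1} = ENNReal.ofReal p := by
  have : {u | stochasticRound r p u = r + 1} = Iio p := by
    ext u; simp [stochasticRound]
  rw [this, unitInterval.volume_Iio]

lemma integral_stochasticRound : ∫ u, (stochasticRound r p u : ℝ) = r + p := by
  simp_rw [cast_stochasticRound]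
  rw [integral_add (integrable_const _) ((integrable_const 1).indicator measurableSet_Iio),
    integral_indicator_one measurableSet_Iio, measureReal_def, unitInterval.volume_Iio,
    ENNReal.toReal_ofReal p.2.1]
  simp

lemma stochasticRound_sub_mem_Icc (r' : ℕ) (q : I) :
    ∃ n : ℤ, ∀ u, (stochasticRound r p u : ℝ) - stochasticRound r' q u ∈ Icc (n : ℝ) (n + 1) := by
  rcases le_total p q with hpq | hqp
  · refine ⟨r - r' - 1, fun u => ?_⟩
    unfold stochasticRound
    split_ifs with hu hu' hu' <;> push_cast
    all_goals first | exact absurd (hu.trans_le hpq) hu' | constructor <;> linarith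
  · refine ⟨r - r', fun u => ?_⟩
    unfold stochasticRound
    split_ifs with hu hu' hu' <;> push_cast
    all_goals first | exact absurd (hu'.trans_le hqp) hu | constructor <;> linarith

lemma integral_stochasticRound_sub (r' : ℕ) (q : I) :
    ∫ u, ((stochasticRound r p u : ℝ) - stochasticRound r' q u) = r + p - (r' + q) := by
  rw [integral_sub (integrable_stochasticRound r p) (integrable_stochasticRound r' q),
    integral_stochasticRound, integral_stochasticRound]

end StochasticRound

lemma abs_stochasticRound_sub_le {r r' : ℕ} {p q : I} {D : ℝ} (hD : (r : ℝ) + p - (r' + q) = D)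
    (u : I) : |(stochasticRound r p u : ℝ) - stochasticRound r' q u| ≤ |D| + 1 := by
  obtain ⟨n, hn⟩ := stochasticRound_sub_mem_Icc r p r' q
  have h := abs_sub_integral_le_one (μ := volume) (by fun_prop) hn u
  rw [integral_stochasticRound_sub, hD] at h
  linarith [abs_sub_abs_le_abs_sub ((stochasticRound r p u : ℝ) - stochasticRound r' q u) D]

section Coupling

variable {ι : Type*} [Fintype ι] (r r' : ι → ℕ) (p q : ι → I)

lemma iIndepFun_stochasticRound_pi :
    iIndepFun (fun i (ω : ι → I) => stochasticRound (r i) (p i) (ω i)) volume :=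
  iIndepFun_pi fun _ => (measurable_stochasticRound _ _).aemeasurable

lemma volumeReal_stochasticRound_pi_eq_succ (i : ι) :
    volume.real {ω : ι → I | stochasticRound (r i) (p i) (ω i) = r i + 1} = p i := by
  rw [measureReal_def, ← ENNReal.toReal_ofReal (p i).2.1, ← volume_stochasticRound_eq_succ (r i)]
  congr 1
  exact (measurePreserving_eval (fun _ : ι => (volume : Measure I)) i).measure_preimage
    (measurableSet_eq_fun (measurable_stochasticRound _ _) measurable_const).nullMeasurableSet

lemma volume_stochasticRound_pi_eq_or_eq_succ (i : ι) :
    volume {ω : ι → I | stochasticRound (r i) (p i) (ω i) = r i ∨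
      stochasticRound (r i) (p i) (ω i) = r i + 1} = 1 := by
  simp [stochasticRound_eq_or_eq_succ]

theorem le_volumeReal_stochasticRound_coupling {D : ι → ℝ}
    (hD : ∀ i, (r i : ℝ) + p i - (r' i + q i) = D i) {L c : ℝ} (hL : ∑ i, |D i| ≤ L)
    (hc : 0 < c) :
    1 - 2 * exp (-c) ≤ volume.real {ω : ι → I |
      ∑ i, |(stochasticRound (r i) (p i) (ω i) : ℝ) - stochasticRound (r' i) (q i) (ω i)|
        ≤ L + √(2 * L * c) + 4 / 3 * c ∧
      √(∑ i, ((stochasticRound (r i) (p i) (ω i) : ℝ) - stochasticRound (r' i) (q i) (ω i)) ^ 2)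
        ≤ √(∑ i, D i ^ 2) + √(L + √(2 * L * c) + 4 / 3 * c)} := by
  set V : ι → (ι → I) → ℝ := fun i ω =>
    (stochasticRound (r i) (p i) (ω i) : ℝ) - stochasticRound (r' i) (q i) (ω i)
  choose n hn using fun i => stochasticRound_sub_mem_Icc (r i) (p i) (r' i) (q i)
  have hmean : ∀ i, ∫ ω, V i ω = D i := fun i => by
    rw [← hD i, ← integral_stochasticRound_sub, volume_pi]
    exact integral_comp_eval (μ := fun _ : ι => (volume : Measure I)) (f := fun u =>
      (stochasticRound (r i) (p i) u : ℝ) - stochasticRound (r' i) (q i) u) (by fun_prop)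
  have hindV : iIndepFun V volume := iIndepFun_pi (X := fun i u =>
    (stochasticRound (r i) (p i) u : ℝ) - stochasticRound (r' i) (q i) u) fun _ => by fun_prop
  simpa only [hmean] using le_measureReal_sum_abs_le_and_sqrt_sum_sq_le hindV
    (fun _ => by fun_prop) (fun i ω => hn i (ω i)) (by simpa only [hmean] using hL) hc

end Coupling


theorem quantization_coupling_general
    (d k : ℕ) (hk : 2 ≤ k)
    (Xmax δ : ℝ) (hXmax : 0 < Xmax) (hδ0 : 0 < δ) (hδ1 : δ < 1)
    (X X' : Fin d → ℝ)
    (w : ℝ) (hw : w = 2 * Xmax / ((k : ℝ) - 1))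
    (B : ℕ → ℝ) (hB : ∀ t : ℕ, B t = -Xmax + t * w)
    (r r' : Fin d → ℕ)
    (hr : ∀ j, r j + 1 ≤ k - 1 ∧ B (r j) ≤ X j ∧ X j ≤ B (r j + 1))
    (hr' : ∀ j, r' j + 1 ≤ k - 1 ∧ B (r' j) ≤ X' j ∧ X' j ≤ B (r' j + 1))
    (Ltil : ℝ) (hLtil : Ltil = (∑ j, |X j - X' j|) / w) :
    ∃ (Ω : Type) (_ : MeasurableSpace Ω) (μ : Measure Ω) (_ : IsProbabilityMeasure μ)
      (Y Y' : Ω → Fin d → ℕ),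
      -- Y has the law of the stochastic quantization U(X)
      iIndepFun (fun j ω => Y ω j) μ ∧
      (∀ j, (μ {ω | Y ω j = r j + 1}).toReal = (X j - B (r j)) / w ∧
        μ {ω | Y ω j = r j ∨ Y ω j = r j + 1} = 1) ∧
      -- Y' has the law of the stochastic quantization U(X')
      iIndepFun (fun j ω => Y' ω j) μ ∧
      (∀ j, (μ {ω | Y' ω j = r' j + 1}).toReal = (X' j - B (r' j)) / w ∧
        μ {ω | Y' ω j = r' j ∨ Y' ω j = r' j + 1} = 1) ∧
      -- ℓ∞ bound, almost surely
      (∀ᵐ ω ∂μ, ∀ j, |(Y ω j : ℝ) - (Y' ω j : ℝ)| ≤ (⨆ j', |X j' - X' j'|) / w + 2) ∧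
      -- ℓ₁ and ℓ₂ bounds, with probability at least 1 - δ
      1 - δ ≤
        (μ {ω |
          (∑ j, |(Y ω j : ℝ) - (Y' ω j : ℝ)|
            ≤ Ltil + Real.sqrt (2 * Ltil * Real.log (2 / δ)) + 4 / 3 * Real.log (2 / δ))
          ∧ Real.sqrt (∑ j, ((Y ω j : ℝ) - (Y' ω j : ℝ)) ^ 2)
            ≤ Real.sqrt (∑ j, (X j - X' j) ^ 2) / w
              + Real.sqrt (Ltil + Real.sqrt (8 * Ltil * Real.log (2 / δ))
                  + 4 / 3 * Real.log (2 / δ))}).toReal := by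
  have hw0 : 0 < w := by
    have : (2 : ℝ) ≤ k := by exact_mod_cast hk
    rw [hw]; exact div_pos (by linarith) (by linarith)
  have hBsucc (t : ℕ) : B (t + 1) = B t + w := by rw [hB, hB]; push_cast; ring
  have hp j := sub_div_mem_unitInterval hw0 (hr j).2.1 (hBsucc _ ▸ (hr j).2.2)
  have hq j := sub_div_mem_unitInterval hw0 (hr' j).2.1 (hBsucc _ ▸ (hr' j).2.2)
  set p : Fin d → I := fun j => ⟨_, hp j⟩
  set q : Fin d → I := fun j => ⟨_, hq j⟩
  have hD j : (r j : ℝ) + p j - (r' j + q j) = (X j - X' j) / w := by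
    simp only [p, q, hB]; field_simp; ring
  have hL : ∑ j, |(X j - X' j) / w| = Ltil := by
    simp_rw [abs_div, abs_of_pos hw0, ← Finset.sum_div, hLtil]
  have hc : 0 < log (2 / δ) := log_pos (by rw [lt_div_iff₀ hδ0]; linarith)
  refine ⟨Fin d → I, inferInstance, volume, inferInstance,
    fun ω j => stochasticRound (r j) (p j) (ω j), fun ω j => stochasticRound (r' j) (q j) (ω j),
    iIndepFun_stochasticRound_pi r p, fun j => ⟨volumeReal_stochasticRound_pi_eq_succ r p j,
      volume_stochasticRound_pi_eq_or_eq_succ r p j⟩,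
    iIndepFun_stochasticRound_pi r' q, fun j => ⟨volumeReal_stochasticRound_pi_eq_succ r' q j,
      volume_stochasticRound_pi_eq_or_eq_succ r' q j⟩, ae_of_all _ fun ω j => ?_, ?_⟩
  · have hsup := div_le_div_of_nonneg_right
      (le_ciSup (finite_range fun j' => |X j' - X' j'|).bddAbove j) hw0.le
    have := abs_stochasticRound_sub_le (hD j) (ω j)
    rw [abs_div, abs_of_pos hw0] at this
    linarith
  · have key := le_volumeReal_stochasticRound_coupling r r' p q hD hL.le hc
    rw [exp_neg, exp_log (by positivity), inv_div] at key
    refine le_trans (by linarith) (key.trans (measureReal_mono fun ω hω => ⟨hω.1, hω.2.trans ?_⟩))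
    rw [sqrt_sum_div_sq _ hw0]
    have hL0 : 0 ≤ Ltil := hL ▸ Finset.sum_nonneg fun j _ => abs_nonneg _
    gcongr
    nlinarith

/-- Lemma 5, high-probability sensitivity of `π_sk`: there is a
coupling `(Y, Y')` of the stochastic quantizations of `X` and `X'` whose
`ℓ_∞` distance is almost surely at most `‖X - X'‖_∞/w + 2`, and whose `ℓ₁` and
`ℓ₂` distances satisfy the stated bounds with probability at least `1 - δ`. -/
theorem quantization_coupling
    (d k : ℕ) (hd : 1 ≤ d) (hk : 2 ≤ k)
    (Xmax δ : ℝ) (hXmax : 0 < Xmax) (hδ0 : 0 < δ) (hδ1 : δ < 1)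
    (X X' : Fin d → ℝ)
    (hX : ∀ j, |X j| ≤ Xmax) (hX' : ∀ j, |X' j| ≤ Xmax)
    (w : ℝ) (hw : w = 2 * Xmax / ((k : ℝ) - 1))
    (B : ℕ → ℝ) (hB : ∀ t : ℕ, B t = -Xmax + t * w)
    (r r' : Fin d → ℕ)
    (hr : ∀ j, r j + 1 ≤ k - 1 ∧ B (r j) ≤ X j ∧ X j ≤ B (r j + 1))
    (hr' : ∀ j, r' j + 1 ≤ k - 1 ∧ B (r' j) ≤ X' j ∧ X' j ≤ B (r' j + 1))
    (Ltil : ℝ) (hLtil : Ltil = (∑ j, |X j - X' j|) / w) :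
    ∃ (Ω : Type) (_ : MeasurableSpace Ω) (μ : Measure Ω) (_ : IsProbabilityMeasure μ)
      (Y Y' : Ω → Fin d → ℕ),
      -- Y has the law of the stochastic quantization U(X)
      iIndepFun (fun j ω => Y ω j) μ ∧
      (∀ j, (μ {ω | Y ω j = r j + 1}).toReal = (X j - B (r j)) / w ∧
        μ {ω | Y ω j = r j ∨ Y ω j = r j + 1} = 1) ∧
      -- Y' has the law of the stochastic quantization U(X')
      iIndepFun (fun j ω => Y' ω j) μ ∧
      (∀ j, (μ {ω | Y' ω j = r' j + 1}).toReal = (X' j - B (r' j)) / w ∧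
        μ {ω | Y' ω j = r' j ∨ Y' ω j = r' j + 1} = 1) ∧
      -- ℓ∞ bound, almost surely
      (∀ᵐ ω ∂μ, ∀ j, |(Y ω j : ℝ) - (Y' ω j : ℝ)| ≤ (⨆ j', |X j' - X' j'|) / w + 2) ∧
      -- ℓ₁ and ℓ₂ bounds, with probability at least 1 - δ
      1 - δ ≤
        (μ {ω |
          (∑ j, |(Y ω j : ℝ) - (Y' ω j : ℝ)|
            ≤ Ltil + Real.sqrt (2 * Ltil * Real.log (2 / δ)) + 4 / 3 * Real.log (2 / δ))
          ∧ Real.sqrt (∑ j, ((Y ω j : ℝ) - (Y' ω j : ℝ)) ^ 2)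
            ≤ Real.sqrt (∑ j, (X j - X' j) ^ 2) / w
              + Real.sqrt (Ltil + Real.sqrt (8 * Ltil * Real.log (2 / δ))
                  + 4 / 3 * Real.log (2 / δ))}).toReal :=
  quantization_coupling_general d k hk Xmax δ hXmax hδ0 hδ1 X X' w hw B hB r r' hr hr' Ltil hLtil
end

section
/- Let N ≥ 1 be an integer, p ∈ (0,1), and let w ∼ Bin(N−1, p). Then for every integer i ≥ 1: E[ w!/(w+i)! ] ≤ 1/(Np)^i, i.e., E[ 1/((w+1)(w+2)⋯(w+i)) ] ≤ (Np)^{−i}. -/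
lemma prodA (j : ℕ) : ∀ i : ℕ, (∏ l ∈ Finset.range i, ((j : ℝ) + l + 1)) * (j.factorial : ℝ)
    = ((j + i).factorial : ℝ)
  | 0 => by simp
  | (n+1) => by
    rw [Finset.prod_range_succ, mul_right_comm, prodA j n,
        show j + (n+1) = (j+n)+1 from rfl, Nat.factorial_succ]
    push_cast; ring

lemma natId (M i j : ℕ) (hj : j ≤ M) :
    M.choose j * (M + i).factorial * j.factorial
      = M.factorial * ((M + i).choose (j + i) * (j + i).factorial) := by
  have h1 := Nat.choose_mul_factorial_mul_factorial hj
  have h2 := Nat.choose_mul_factorial_mul_factorial (show j + i ≤ M + i by omega)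
  have h3 : M + i - (j + i) = M - j := by omega
  rw [h3] at h2
  apply Nat.eq_of_mul_eq_mul_right (Nat.factorial_pos (M - j))
  calc M.choose j * (M + i).factorial * j.factorial * (M - j).factorial
      = (M.choose j * j.factorial * (M - j).factorial) * (M + i).factorial := by ring
    _ = M.factorial * (M + i).factorial := by rw [h1]
    _ = M.factorial * ((M + i).choose (j + i) * (j + i).factorial * (M - j).factorial) := by
        rw [h2]
    _ = M.factorial * ((M + i).choose (j + i) * (j + i).factorial) * (M - j).factorial := by
        ring

lemma natFac (N : ℕ) (hN : 1 ≤ N) : ∀ i : ℕ, (N - 1).factorial * N ^ i ≤ (N - 1 + i).factorial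
  | 0 => by simp
  | (n+1) => by
    have ih := natFac N hN n
    rw [show N - 1 + (n+1) = (N - 1 + n) + 1 from by omega, Nat.factorial_succ, pow_succ]
    calc (N-1).factorial * (N^n * N) = ((N-1).factorial * N^n) * N := by ring
      _ ≤ (N-1+n).factorial * N := Nat.mul_le_mul_right _ ih
      _ ≤ (N-1+n).factorial * (N-1+n+1) := Nat.mul_le_mul le_rfl (by omega)
      _ = (N-1+n+1) * (N-1+n).factorial := Nat.mul_comm _ _

/-- For `w ~ Bin(N-1, p)` and any integer `i ≥ 1`,
`E[w!/(w+i)!] = E[1/((w+1)⋯(w+i))] ≤ 1/(Np)^i`. -/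
theorem binomial_expectation_inv_rising_factorial
    (N : ℕ) (hN : 1 ≤ N) (p : ℝ) (hp : 0 < p) (hp1 : p < 1)
    (i : ℕ) (hi : 1 ≤ i) :
    ∑ j ∈ Finset.range N, binomPMF (N - 1) p j *
        (1 / ∏ l ∈ Finset.range i, ((j : ℝ) + l + 1))
      ≤ 1 / ((N : ℝ) * p) ^ i := by
  set M := N - 1 with hM
  have hMN : M + 1 = N := by omega
  set c : ℝ := (M.factorial : ℝ) / (((M + i).factorial : ℝ) * p ^ i) with hc
  have hpi : (0:ℝ) < p ^ i := pow_pos hp i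
  have hfacpos : (0:ℝ) < ((M + i).factorial : ℝ) := by positivity
  -- term equality
  have hterm : ∀ j ∈ Finset.range N,
      binomPMF M p j * (1 / ∏ l ∈ Finset.range i, ((j : ℝ) + l + 1))
        = c * binomPMF (M + i) p (j + i) := by
    intro j hj
    have hjM : j ≤ M := by simp at hj; omega
    have hP : (0:ℝ) < ∏ l ∈ Finset.range i, ((j : ℝ) + l + 1) := by
      apply Finset.prod_pos; intro l _; positivity
    have hjf : (0:ℝ) < (j.factorial : ℝ) := by positivity
    -- A = B * P
    have hABP : (M.choose j : ℝ) * ((M + i).factorial : ℝ)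
        = (M.factorial : ℝ) * ((M + i).choose (j + i) : ℝ)
          * ∏ l ∈ Finset.range i, ((j : ℝ) + l + 1) := by
      apply mul_right_cancel₀ (ne_of_gt hjf)
      have := natId M i j hjM
      have hcast : (M.choose j : ℝ) * ((M + i).factorial : ℝ) * (j.factorial : ℝ)
          = (M.factorial : ℝ) * (((M + i).choose (j + i) : ℝ) * ((j + i).factorial : ℝ)) := by
        exact_mod_cast congrArg (Nat.cast : ℕ → ℝ) this
      rw [hcast, ← prodA j i]; ring
    have h3 : M + i - (j + i) = M - j := by omega
    unfold binomPMF
    rw [h3, hc]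
    field_simp
    rw [pow_add]
    linear_combination (p ^ j * p ^ i * (1 - p) ^ (M - j)) * hABP
  rw [Finset.sum_congr rfl hterm, ← Finset.mul_sum]
  have hnn : ∀ k, 0 ≤ binomPMF (M + i) p k := by
    intro k; unfold binomPMF
    have : (0:ℝ) ≤ 1 - p := by linarith
    positivity
  -- bound the shifted pmf sum by 1
  have hsum1 : ∑ j ∈ Finset.range N, binomPMF (M + i) p (j + i) ≤ 1 := by
    have hfull : ∑ k ∈ Finset.range (M + i + 1), binomPMF (M + i) p k = 1 := by
      have h : (1:ℝ) = ∑ m ∈ Finset.range (M + i + 1),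
          p ^ m * (1 - p) ^ (M + i - m) * ((M + i).choose m : ℝ) := by
        have h0 := add_pow p (1 - p) (M + i)
        simpa using h0
      refine Eq.trans ?_ h.symm
      apply Finset.sum_congr rfl
      intro k _; unfold binomPMF; ring
    have hshift : ∑ j ∈ Finset.range N, binomPMF (M + i) p (j + i)
        = ∑ k ∈ Finset.Ico i (N + i), binomPMF (M + i) p k := by
      rw [Finset.sum_Ico_eq_sum_range]
      simp only [Nat.add_sub_cancel]
      apply Finset.sum_congr rfl
      intro j _; rw [Nat.add_comm i j]
    rw [hshift, ← hfull]
    apply Finset.sum_le_sum_of_subset_of_nonneg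
    · intro k hk
      simp only [Finset.mem_Ico] at hk
      simp only [Finset.mem_range]
      omega
    · intro k _ _; exact hnn k
  have hc0 : 0 ≤ c := by positivity
  have hSnn : 0 ≤ ∑ j ∈ Finset.range N, binomPMF (M + i) p (j + i) :=
    Finset.sum_nonneg fun j _ => hnn _
  calc c * ∑ j ∈ Finset.range N, binomPMF (M + i) p (j + i)
      ≤ c * 1 := by exact mul_le_mul_of_nonneg_left hsum1 hc0
    _ = c := mul_one c
    _ ≤ 1 / ((N : ℝ) * p) ^ i := by
        rw [hc, mul_pow, div_le_div_iff₀ (by positivity) (by positivity)]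
        have hnat := natFac N hN i
        have : (M.factorial : ℝ) * (N : ℝ) ^ i ≤ ((M + i).factorial : ℝ) := by
          exact_mod_cast hnat
        nlinarith [pow_pos hp i]
end

section
/- Let N ≥ 1 be an integer, p ∈ (0,1) with N p(1−p) ≥ 2, and let w ∼ Bin(N−1, p). Then E[ 1/((w+1)(w+2)) − (2/(N p(1−p)))·1/(w+1) ] ≤ 1/(Np)² − 2/(N² p² (1−p)). -/
open Finset

theorem sum_binomPMF (n : ℕ) (p : ℝ) : ∑ k ∈ range (n + 1), binomPMF n p k = 1 := by
  have h := add_pow p (1 - p) n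
  simp only [add_sub_cancel, one_pow] at h
  rw [h]
  exact sum_congr rfl fun k _ => by unfold binomPMF; ring

theorem sum_binomPMF_succ (n : ℕ) (p : ℝ) :
    ∑ k ∈ range n, binomPMF n p (k + 1) = 1 - (1 - p) ^ n := by
  have h := sum_binomPMF n p
  have h₀ : binomPMF n p 0 = (1 - p) ^ n := by simp [binomPMF]
  rw [sum_range_succ', h₀] at h
  linarith

theorem sum_binomPMF_add_two (n : ℕ) (p : ℝ) :
    ∑ k ∈ range (n + 1), binomPMF (n + 2) p (k + 2)
      = 1 - (1 - p) ^ (n + 2) - ((n : ℝ) + 2) * p * (1 - p) ^ (n + 1) := by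
  have h := sum_binomPMF_succ (n + 2) p
  have h₁ : binomPMF (n + 2) p 1 = ((n : ℝ) + 2) * p * (1 - p) ^ (n + 1) := by
    simp [binomPMF]
  rw [sum_range_succ', h₁] at h
  linarith

theorem add_one_mul_mul_binomPMF (n : ℕ) (p : ℝ) (k : ℕ) :
    ((n : ℝ) + 1) * p * binomPMF n p k = ((k : ℝ) + 1) * binomPMF (n + 1) p (k + 1) := by
  have h : ((n : ℝ) + 1) * (n.choose k : ℝ) = ((n + 1).choose (k + 1) : ℝ) * ((k : ℝ) + 1) := by
    exact_mod_cast Nat.add_one_mul_choose_eq n k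
  unfold binomPMF
  rw [Nat.add_sub_add_right]
  linear_combination p ^ (k + 1) * (1 - p) ^ (n - k) * h

theorem mul_sum_binomPMF_div_add_one (n : ℕ) (p : ℝ) :
    ((n : ℝ) + 1) * p * ∑ k ∈ range (n + 1), binomPMF n p k * (1 / ((k : ℝ) + 1))
      = 1 - (1 - p) ^ (n + 1) := by
  rw [← sum_binomPMF_succ, mul_sum]
  refine sum_congr rfl fun k _ => ?_
  rw [← mul_assoc, add_one_mul_mul_binomPMF]
  field_simp

theorem mul_sum_binomPMF_div_add_one_mul_add_two (n : ℕ) (p : ℝ) :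
    ((n : ℝ) + 1) * ((n : ℝ) + 2) * p ^ 2 *
        ∑ k ∈ range (n + 1), binomPMF n p k * (1 / (((k : ℝ) + 1) * ((k : ℝ) + 2)))
      = 1 - (1 - p) ^ (n + 2) - ((n : ℝ) + 2) * p * (1 - p) ^ (n + 1) := by
  rw [← sum_binomPMF_add_two, mul_sum]
  refine sum_congr rfl fun k _ => ?_
  have h₁ := add_one_mul_mul_binomPMF n p k
  have h₂ := add_one_mul_mul_binomPMF (n + 1) p (k + 1)
  push_cast at h₂
  field_simp
  linear_combination ((n : ℝ) + 1 + 1) * p * h₁ + ((k : ℝ) + 1) * h₂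

theorem second_order_bound_of_closed_forms {n p x S₁ S₂ : ℝ} (hn : 0 < n) (hp : 0 < p)
    (hp1 : p < 1) (hx : 0 ≤ x) (hnp : 2 ≤ n * p * (1 - p))
    (hS₁ : S₁ = (1 - (1 - p) * x) / (n * p))
    (hS₂ : S₂ = (1 - (1 - p) ^ 2 * x - (n + 1) * p * ((1 - p) * x)) / (n * (n + 1) * p ^ 2)) :
    S₂ - 2 / (n * p * (1 - p)) * S₁ ≤ 1 / (n * p) ^ 2 - 2 / (n ^ 2 * p ^ 2 * (1 - p)) := by
  set q := 1 - p
  have hq : 0 < q := sub_pos.mpr hp1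
  have hgap : 1 / (n * p) ^ 2 - 2 / (n ^ 2 * p ^ 2 * q) - (S₂ - 2 / (n * p * q) * S₁)
      = q * (1 + x * (n * q ^ 2 + (n + 1) * (n * p * q - 2))) / (n ^ 2 * (n + 1) * p ^ 2 * q) := by
    subst hS₁ hS₂
    field_simp
    ring
  have hc : 0 ≤ n * q ^ 2 + (n + 1) * (n * p * q - 2) := by
    have : 0 ≤ n * p * q - 2 := by linarith
    positivity
  rw [← sub_nonneg, hgap]
  positivity

/-- For `w ~ Bin(N-1, p)` with `Np(1-p) ≥ 2`,
`E[1/((w+1)(w+2)) - (2/(Np(1-p)))·1/(w+1)] ≤ 1/(Np)² - 2/(N²p²(1-p))`. -/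
theorem binomial_expectation_second_order_bound
    (N : ℕ) (hN : 1 ≤ N) (p : ℝ) (hp : 0 < p) (hp1 : p < 1)
    (hNp : 2 ≤ (N : ℝ) * p * (1 - p)) :
    ∑ j ∈ Finset.range N, binomPMF (N - 1) p j *
        (1 / (((j : ℝ) + 1) * ((j : ℝ) + 2))
          - (2 / ((N : ℝ) * p * (1 - p))) * (1 / ((j : ℝ) + 1)))
      ≤ 1 / ((N : ℝ) * p) ^ 2 - 2 / ((N : ℝ) ^ 2 * p ^ 2 * (1 - p)) := by
  obtain ⟨n, rfl⟩ : ∃ n, N = n + 1 := ⟨N - 1, by omega⟩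
  simp_rw [mul_sub (binomPMF _ _ _), sum_sub_distrib, mul_left_comm (binomPMF _ _ _), ← mul_sum,
    Nat.add_sub_cancel]
  have hn : (0 : ℝ) < n + 1 := by positivity
  push_cast at hNp ⊢
  refine second_order_bound_of_closed_forms hn hp hp1 (pow_nonneg (sub_pos.mpr hp1).le n) hNp ?_ ?_
  · rw [eq_div_iff (by positivity), mul_comm, mul_sum_binomPMF_div_add_one, pow_succ']
  · rw [eq_div_iff (by positivity), mul_comm, add_assoc, one_add_one_eq_two,
      mul_sum_binomPMF_div_add_one_mul_add_two]
    ring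
end

section
/- Let N ≥ 1 be an integer, p ∈ (0,1), and let v be an integer with 0 ≤ v ≤ N and |v − Np| ≤ N·min(p, 1−p)/3. Then | log((v+1)(1−p)/((N−v+1)p)) − (v+1)/(Np) + (N−v+1)/(N(1−p)) | ≤ (1.95/3)·( (v + 1 − Np)/(Np) )² + (1.95/3)·( (N − v + 1 − N(1−p))/(N(1−p)) )². -/
/-!
Writing `z₁ = (v + 1 - Np)/(Np)` and `z₂ = (N - v + 1 - N(1-p))/(N(1-p))`, the two linear terms are
`1 + z₁` and `1 + z₂` and the logarithm is `log (1 + z₁) - log (1 + z₂)`, so everything reduces to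
`|log (1 + z) - z| ≤ 0.65 z²` for `z ≥ -1/3`; the concentration hypothesis says exactly that
`z₁, z₂ ≥ -1/3`. For `z ≥ 0` the error is at most `z²/2`. For `z < 0` the constant is nearly sharp
(the ratio `(z - log (1 + z))/z²` is `0.6492…` at `z = -1/3`), so we use eight terms of the series
of `-log (1 - t)` together with its geometric tail bound.
-/

open Real

lemma neg_log_one_sub_sub_le {t : ℝ} (ht0 : 0 ≤ t) (ht : t ≤ 1 / 3) :
    -log (1 - t) - t ≤ 1.95 / 3 * t ^ 2 := by
  have hseries := abs_log_sub_add_sum_range_le (x := t) (by rw [abs_of_nonneg ht0]; linarith) 8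
  simp only [Finset.sum_range_succ, Finset.sum_range_zero, abs_of_nonneg ht0] at hseries
  have htail : t ^ 9 / (1 - t) ≤ 3 / 2 * t ^ 9 := by
    rw [div_le_iff₀ (by linarith)]
    nlinarith [pow_nonneg ht0 9]
  have hcoeff : t / 3 + t ^ 2 / 4 + t ^ 3 / 5 + t ^ 4 / 6 + t ^ 5 / 7 + t ^ 6 / 8 + 3 / 2 * t ^ 7
      ≤ 1.95 / 3 - 1 / 2 := by
    have := fun k ↦ pow_le_pow_left₀ ht0 ht k
    norm_num at this ⊢
    linarith [this 2, this 3, this 4, this 5, this 6, this 7]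
  norm_num at hseries
  nlinarith [(abs_le.mp hseries).1, mul_le_mul_of_nonneg_left hcoeff (sq_nonneg t)]

lemma sub_log_one_add_le {z : ℝ} (hz : 0 ≤ z) : z - log (1 + z) ≤ z ^ 2 / 2 := by
  have hlog := le_log_one_add_of_nonneg hz
  have : z - 2 * z / (z + 2) ≤ z ^ 2 / 2 := by
    rw [sub_le_comm, le_div_iff₀ (by linarith)]
    nlinarith [sq_nonneg z, pow_nonneg hz 3]
  linarith

lemma abs_log_one_add_sub_le {z : ℝ} (hz : -(1 / 3) ≤ z) :
    |log (1 + z) - z| ≤ 1.95 / 3 * z ^ 2 := by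
  have hlog : log (1 + z) ≤ z := by linarith [log_le_sub_one_of_pos (x := 1 + z) (by linarith)]
  rw [abs_sub_comm, abs_of_nonneg (by linarith)]
  rcases le_total z 0 with hneg | hpos
  · simpa [sub_neg_eq_add, add_comm] using neg_log_one_sub_sub_le (t := -z) (by linarith) (by linarith)
  · linarith [sub_log_one_add_le hpos, sq_nonneg z]

lemma abs_log_div_sub_sub_le {a b x y : ℝ} (ha : 0 < a) (hb : 0 < b)
    (hx : -(a / 3) ≤ x - a) (hy : -(b / 3) ≤ y - b) :
    |log (x / a / (y / b)) - x / a + y / b|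
      ≤ 1.95 / 3 * ((x - a) / a) ^ 2 + 1.95 / 3 * ((y - b) / b) ^ 2 := by
  have hxa : x / a = 1 + (x - a) / a := by field_simp; ring
  have hyb : y / b = 1 + (y - b) / b := by field_simp; ring
  have hz₁ : -(1 / 3) ≤ (x - a) / a := by rw [le_div_iff₀ ha]; linarith
  have hz₂ : -(1 / 3) ≤ (y - b) / b := by rw [le_div_iff₀ hb]; linarith
  rw [hxa, hyb, log_div (by linarith) (by linarith)]
  calc _ = |(log (1 + (x - a) / a) - (x - a) / a) - (log (1 + (y - b) / b) - (y - b) / b)| := by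
          congr 1; ring
    _ ≤ _ := (abs_sub _ _).trans (add_le_add (abs_log_one_add_sub_le hz₁) (abs_log_one_add_sub_le hz₂))

theorem binomial_loglikelihood_linearization_bound_general
    (N : ℕ) (hN : 1 ≤ N) (p : ℝ) (hp : 0 < p) (hp1 : p < 1)
    (v : ℕ)
    (hconc : |(v : ℝ) - N * p| ≤ N * min p (1 - p) / 3) :
    |Real.log (((v : ℝ) + 1) * (1 - p) / (((N : ℝ) - v + 1) * p))
        - ((v : ℝ) + 1) / (N * p) + ((N : ℝ) - v + 1) / (N * (1 - p))|
      ≤ (1.95 / 3) * (((v : ℝ) + 1 - N * p) / (N * p)) ^ 2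
        + (1.95 / 3) * (((N : ℝ) - v + 1 - N * (1 - p)) / (N * (1 - p))) ^ 2 := by
  have hN0 : (0 : ℝ) < N := by exact_mod_cast hN
  have hq : 0 < 1 - p := by linarith
  have hmin_p : (N : ℝ) * min p (1 - p) ≤ N * p := by gcongr; exact min_le_left _ _
  have hmin_q : (N : ℝ) * min p (1 - p) ≤ N * (1 - p) := by gcongr; exact min_le_right _ _
  obtain ⟨hlow, hhigh⟩ := abs_le.mp hconc
  have hratio : ((v : ℝ) + 1) * (1 - p) / (((N : ℝ) - v + 1) * p)
      = ((v : ℝ) + 1) / (N * p) / (((N : ℝ) - v + 1) / (N * (1 - p))) := by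
    field_simp
  rw [hratio]
  exact abs_log_div_sub_sub_le (by positivity) (by positivity) (by linarith) (by linarith)

/-- deviation of the binomial log-likelihood-ratio term from its
linearization, for `v` within `N·min(p,1-p)/3` of the mean `Np`. -/
theorem binomial_loglikelihood_linearization_bound
    (N : ℕ) (hN : 1 ≤ N) (p : ℝ) (hp : 0 < p) (hp1 : p < 1)
    (v : ℕ) (hv : v ≤ N)
    (hconc : |(v : ℝ) - N * p| ≤ N * min p (1 - p) / 3) :
    |Real.log (((v : ℝ) + 1) * (1 - p) / (((N : ℝ) - v + 1) * p))
        - ((v : ℝ) + 1) / (N * p) + ((N : ℝ) - v + 1) / (N * (1 - p))|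
      ≤ (1.95 / 3) * (((v : ℝ) + 1 - N * p) / (N * p)) ^ 2
        + (1.95 / 3) * (((N : ℝ) - v + 1 - N * (1 - p)) / (N * (1 - p))) ^ 2 :=
  binomial_loglikelihood_linearization_bound_general N hN p hp hp1 v hconc
end
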